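/- Let α > 0 and ν > ν_* := (α+1)α^{−α/(α+1)}. The equation y^{2α} + 1/y² = ν has exactly two solutions 0 < ŷ₋(ν) < ŷ₊(ν) on (0,∞), and there exist constants 0 < r₋, r₊ < 1 and R₋, R₊ > 1 independent of ν such that r₋ ν^{−1/2} < ŷ₋(ν) < R₋ ν^{−1/2} and r₊ ν^{1/(2α)} < ŷ₊(ν) < R₊ ν^{1/(2α)} for all ν > ν_*. -/

import Mathlib

/-!
The derivative of `g(y) = y^{2α} + y^{-2}` is `2 (α y^{2α+2} - 1) / y³`, so `g` decreases
strictly up to `c = α^{-1/(2α+2)}` and increases strictly after it, and `g(c) = ν_*`.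
A positive `y` with `g(y) ≤ ν` has `y^{-2} < ν` and `y^{2α} < ν`, i.e.
`ν^{-1/2} < y < ν^{1/(2α)}`, while `g > ν` at both endpoints; the intermediate value theorem
then gives exactly one root on each side of `c`. The sharper bounds compare the two terms of `g`
at a root: left of `c` we have `α y^{2α} < y^{-2}`, hence `ν < (1 + 1/α) y^{-2}`; right of `c`
the reverse inequality gives `ν < (α + 1) y^{2α}`.
-/

open Set

/-- The rescaled potential `g(y) = y^{2α} + 1/y²`. -/
noncomputable def g15 (α : ℝ) (y : ℝ) : ℝ := y ^ (2 * α) + 1 / y ^ 2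

open Real

lemma Real.rpow_add_two {y : ℝ} (hy : y ≠ 0) (p : ℝ) : y ^ (p + 2) = y ^ p * y ^ 2 := by
  exact_mod_cast rpow_add_natCast hy p 2

lemma exists_pair_eq_of_strictAntiOn_of_strictMonoOn {f : ℝ → ℝ} {a b c ν : ℝ}
    (hac : a ≤ c) (hcb : c ≤ b) (hf : ContinuousOn f (Icc a b))
    (hanti : StrictAntiOn f (Icc a c)) (hmono : StrictMonoOn f (Icc c b))
    (hfc : f c < ν) (hfa : ν < f a) (hfb : ν < f b) :
    ∃ ym yp, ym ∈ Ioo a c ∧ yp ∈ Ioo c b ∧ f ym = ν ∧ f yp = ν ∧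
      ∀ y ∈ Icc a b, f y = ν → y = ym ∨ y = yp := by
  obtain ⟨ym, hym, hfym⟩ :=
    intermediate_value_Icc' hac (hf.mono (Icc_subset_Icc_right hcb)) ⟨hfc.le, hfa.le⟩
  obtain ⟨yp, hyp, hfyp⟩ :=
    intermediate_value_Icc hcb (hf.mono (Icc_subset_Icc_left hac)) ⟨hfc.le, hfb.le⟩
  refine ⟨ym, yp, ⟨hym.1.lt_of_ne ?_, hym.2.lt_of_ne ?_⟩,
    ⟨hyp.1.lt_of_ne ?_, hyp.2.lt_of_ne ?_⟩, hfym, hfyp, fun y hy hfy => ?_⟩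
  · rintro rfl; exact hfa.ne' hfym
  · rintro rfl; exact hfc.ne hfym
  · rintro rfl; exact hfc.ne hfyp
  · rintro rfl; exact hfb.ne' hfyp
  rcases le_total y c with hyc | hcy
  · exact .inl <| hanti.injOn ⟨hy.1, hyc⟩ hym (hfy.trans hfym.symm)
  · exact .inr <| hmono.injOn ⟨hcy, hy.2⟩ hyp (hfy.trans hfyp.symm)

noncomputable def g15CritPt (α : ℝ) : ℝ := α⁻¹ ^ (2 * α + 2)⁻¹

section

variable {α ν y : ℝ}

lemma g15_pos (hy : 0 < y) : 0 < g15 α y := by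
  rw [g15]; positivity

lemma g15CritPt_pos (hα : 0 < α) : 0 < g15CritPt α := by
  unfold g15CritPt; positivity

lemma g15CritPt_rpow_two_mul_add_two (hα : 0 < α) : g15CritPt α ^ (2 * α + 2) = α⁻¹ :=
  rpow_inv_rpow (inv_nonneg.2 hα.le) (by positivity)

lemma g15_g15CritPt (hα : 0 < α) :
    g15 α (g15CritPt α) = (α + 1) * α ^ (-α / (α + 1)) := by
  have hc := g15CritPt_pos hα
  have hsq : 1 / g15CritPt α ^ 2 = α * g15CritPt α ^ (2 * α) := by
    rw [div_eq_iff (pow_pos hc 2).ne', mul_assoc, ← rpow_add_two hc.ne',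
      g15CritPt_rpow_two_mul_add_two hα, mul_inv_cancel₀ hα.ne']
  have hpow : g15CritPt α ^ (2 * α) = α ^ (-α / (α + 1)) := by
    rw [g15CritPt, ← rpow_mul (inv_nonneg.2 hα.le), inv_rpow hα.le, ← rpow_neg hα.le]
    congr 1
    field_simp
  rw [g15, hsq, hpow]
  ring

lemma alpha_mul_rpow_lt_one_iff (hα : 0 < α) (hy : 0 ≤ y) :
    α * y ^ (2 * α + 2) < 1 ↔ y < g15CritPt α := by
  rw [← rpow_lt_rpow_iff hy (g15CritPt_pos hα).le (by positivity : 0 < 2 * α + 2),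
    g15CritPt_rpow_two_mul_add_two hα, ← one_div, lt_div_iff₀' hα]

lemma one_lt_alpha_mul_rpow_iff (hα : 0 < α) (hy : 0 ≤ y) :
    1 < α * y ^ (2 * α + 2) ↔ g15CritPt α < y := by
  rw [← rpow_lt_rpow_iff (g15CritPt_pos hα).le hy (by positivity : 0 < 2 * α + 2),
    g15CritPt_rpow_two_mul_add_two hα, ← one_div, div_lt_iff₀' hα]

lemma hasDerivAt_g15 (hy : 0 < y) :
    HasDerivAt (g15 α) (2 * (α * y ^ (2 * α + 2) - 1) / y ^ 3) y := by
  have h : HasDerivAt (fun x => x ^ (2 * α) + (x ^ 2)⁻¹) _ y :=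
    (hasDerivAt_rpow_const (Or.inl hy.ne')).add ((hasDerivAt_pow 2 y).inv (pow_ne_zero 2 hy.ne'))
  rw [show g15 α = fun x => x ^ (2 * α) + (x ^ 2)⁻¹ from funext fun x => by simp [g15]]
  refine h.congr_deriv ?_
  rw [show (2 : ℝ) * α + 2 = 2 * α - 1 + (3 : ℕ) by push_cast; ring, rpow_add_natCast hy.ne']
  field_simp
  ring

lemma continuousOn_g15 : ContinuousOn (g15 α) (Ioi 0) := fun _ hy =>
  (hasDerivAt_g15 hy).continuousAt.continuousWithinAt

lemma strictAntiOn_g15 (hα : 0 < α) : StrictAntiOn (g15 α) (Ioc 0 (g15CritPt α)) := by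
  refine strictAntiOn_of_deriv_neg (convex_Ioc _ _)
    (continuousOn_g15.mono Ioc_subset_Ioi_self) fun y hy => ?_
  rw [interior_Ioc] at hy
  rw [(hasDerivAt_g15 hy.1).deriv]
  have := (alpha_mul_rpow_lt_one_iff hα hy.1.le).2 hy.2
  exact div_neg_of_neg_of_pos (by linarith) (pow_pos hy.1 3)

lemma strictMonoOn_g15 (hα : 0 < α) : StrictMonoOn (g15 α) (Ici (g15CritPt α)) := by
  have hc := g15CritPt_pos hα
  refine strictMonoOn_of_deriv_pos (convex_Ici _)
    (continuousOn_g15.mono fun y hy => hc.trans_le hy) fun y hy => ?_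
  rw [interior_Ici] at hy
  have hy0 : 0 < y := hc.trans hy
  rw [(hasDerivAt_g15 hy0).deriv]
  have := (one_lt_alpha_mul_rpow_iff hα hy0.le).2 hy
  exact div_pos (by linarith) (pow_pos hy0 3)

lemma rpow_neg_half_sq (hν : 0 ≤ ν) : (ν ^ (-(1 : ℝ) / 2)) ^ 2 = ν⁻¹ := by
  rw [← rpow_natCast, ← rpow_mul hν]
  norm_num
  exact rpow_neg_one ν

lemma rpow_neg_half_lt_of_g15_le (hy : 0 < y) (h : g15 α y ≤ ν) :
    ν ^ (-(1 : ℝ) / 2) < y := by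
  have hy2 : 0 < y ^ 2 := by positivity
  have hlt : 1 / y ^ 2 < ν := by
    have := rpow_pos_of_pos hy (2 * α)
    rw [g15] at h
    linarith
  have hν : 0 < ν := (one_div_pos.2 hy2).trans hlt
  rw [← pow_lt_pow_iff_left₀ (by positivity) hy.le two_ne_zero, rpow_neg_half_sq hν.le,
    inv_lt_comm₀ hν hy2, ← one_div]
  exact hlt

lemma lt_rpow_one_div_of_g15_le (hα : 0 < α) (hy : 0 < y) (h : g15 α y ≤ ν) :
    y < ν ^ (1 / (2 * α)) := by
  have hpos := rpow_pos_of_pos hy (2 * α)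
  have hlt : y ^ (2 * α) < ν := by
    have : 0 < 1 / y ^ 2 := by positivity
    rw [g15] at h
    linarith
  rw [one_div, lt_rpow_inv_iff_of_pos hy.le (hpos.trans hlt).le (by positivity)]
  exact hlt

lemma lt_g15_rpow_neg_half (hν : 0 < ν) : ν < g15 α (ν ^ (-(1 : ℝ) / 2)) := by
  have := rpow_pos_of_pos (rpow_pos_of_pos hν (-(1 : ℝ) / 2)) (2 * α)
  rw [g15, rpow_neg_half_sq hν.le, one_div, inv_inv]
  linarith

lemma lt_g15_rpow_one_div (hα : 0 < α) (hν : 0 < ν) : ν < g15 α (ν ^ (1 / (2 * α))) := by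
  rw [g15, one_div (2 * α), rpow_inv_rpow hν.le (by positivity)]
  have : 0 < 1 / (ν ^ (2 * α)⁻¹) ^ 2 := by positivity
  linarith

lemma exists_pair_g15_eq (hα : 0 < α) (hν : g15 α (g15CritPt α) < ν) :
    ∃ ym yp, 0 < ym ∧ ym < g15CritPt α ∧ g15CritPt α < yp ∧
      g15 α ym = ν ∧ g15 α yp = ν ∧
      ∀ y, 0 < y → g15 α y = ν → y = ym ∨ y = yp := by
  have hc := g15CritPt_pos hα
  have hν0 : 0 < ν := (g15_pos hc).trans hν
  have hX : 0 < ν ^ (-(1 : ℝ) / 2) := rpow_pos_of_pos hν0 _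
  obtain ⟨ym, yp, ⟨hXym, hymc⟩, ⟨hcyp, -⟩, hgym, hgyp, hunique⟩ :=
    exists_pair_eq_of_strictAntiOn_of_strictMonoOn
      (rpow_neg_half_lt_of_g15_le hc hν.le).le (lt_rpow_one_div_of_g15_le hα hc hν.le).le
      (continuousOn_g15.mono fun y hy => hX.trans_le hy.1)
      ((strictAntiOn_g15 hα).mono fun y hy => ⟨hX.trans_le hy.1, hy.2⟩)
      ((strictMonoOn_g15 hα).mono fun y hy => hy.1)
      hν (lt_g15_rpow_neg_half hν0) (lt_g15_rpow_one_div hα hν0)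
  refine ⟨ym, yp, hX.trans hXym, hymc, hcyp, hgym, hgyp, fun y hy hgy => hunique y ?_ hgy⟩
  exact ⟨(rpow_neg_half_lt_of_g15_le hy hgy.le).le,
    (lt_rpow_one_div_of_g15_le hα hy hgy.le).le⟩

lemma lt_sqrt_mul_rpow_neg_half_of_lt_g15CritPt (hα : 0 < α) (hy : 0 < y)
    (hyc : y < g15CritPt α) (hgy : g15 α y = ν) :
    y < √((α + 1) / α) * ν ^ (-(1 : ℝ) / 2) := by
  have hν : 0 < ν := hgy ▸ g15_pos hy
  have hsmall := (alpha_mul_rpow_lt_one_iff hα hy.le).2 hyc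
  have hνy : ν * y ^ 2 = y ^ (2 * α + 2) + 1 := by
    rw [← hgy, g15, rpow_add_two hy.ne']
    field_simp
  rw [← pow_lt_pow_iff_left₀ hy.le (by positivity) two_ne_zero, mul_pow,
    sq_sqrt (by positivity), rpow_neg_half_sq hν.le, ← div_eq_mul_inv, div_div,
    lt_div_iff₀ (by positivity)]
  calc y ^ 2 * (α * ν) = α * (ν * y ^ 2) := by ring
    _ < α + 1 := by rw [hνy]; linarith

lemma inv_rpow_mul_rpow_lt_of_g15CritPt_lt (hα : 0 < α) (hcy : g15CritPt α < y)
    (hgy : g15 α y = ν) :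
    (α + 1)⁻¹ ^ (1 / (2 * α)) * ν ^ (1 / (2 * α)) < y := by
  have hy : 0 < y := (g15CritPt_pos hα).trans hcy
  have hν : 0 < ν := hgy ▸ g15_pos hy
  have hbig := (one_lt_alpha_mul_rpow_iff hα hy.le).2 hcy
  have hsq : 1 / y ^ 2 < α * y ^ (2 * α) := by
    rw [div_lt_iff₀ (by positivity), mul_assoc, ← rpow_add_two hy.ne']
    exact hbig
  rw [← mul_rpow (by positivity) hν.le, one_div,
    rpow_inv_lt_iff_of_pos (by positivity) hy.le (by positivity), inv_mul_lt_iff₀ (by positivity),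
    ← hgy, g15]
  linarith

end

/-- For `ν > ν_* = (α+1)α^{−α/(α+1)}`, the equation `y^{2α} + 1/y² = ν` has exactly
two positive solutions `ŷ₋(ν) < ŷ₊(ν)`, and there are constants
`0 < r₋, r₊ < 1 < R₋, R₊` independent of `ν` with
`r₋ ν^{−1/2} < ŷ₋(ν) < R₋ ν^{−1/2}` and `r₊ ν^{1/(2α)} < ŷ₊(ν) < R₊ ν^{1/(2α)}`. -/
theorem stmt15 (α : ℝ) (hα : 0 < α) :
    ∃ rm rp Rm Rp : ℝ, 0 < rm ∧ rm < 1 ∧ 0 < rp ∧ rp < 1 ∧ 1 < Rm ∧ 1 < Rp ∧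
      ∀ ν : ℝ, (α + 1) * α ^ (-α / (α + 1)) < ν →
        ∃ ym yp : ℝ, 0 < ym ∧ ym < yp ∧
          g15 α ym = ν ∧ g15 α yp = ν ∧
          (∀ y : ℝ, 0 < y → g15 α y = ν → y = ym ∨ y = yp) ∧
          rm * ν ^ (-(1:ℝ)/2) < ym ∧ ym < Rm * ν ^ (-(1:ℝ)/2) ∧
          rp * ν ^ (1 / (2 * α)) < yp ∧ yp < Rp * ν ^ (1 / (2 * α)) := by
  refine ⟨1 / 2, (α + 1)⁻¹ ^ (1 / (2 * α)), √((α + 1) / α), 2, by norm_num, by norm_num,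
    by positivity,
    rpow_lt_one (by positivity) (inv_lt_one_of_one_lt₀ (by linarith)) (by positivity),
    (lt_sqrt zero_le_one).2 (by rw [one_pow, one_lt_div hα]; linarith), one_lt_two,
    fun ν hν => ?_⟩
  rw [← g15_g15CritPt hα] at hν
  obtain ⟨ym, yp, hym, hymc, hcyp, hgym, hgyp, hunique⟩ := exists_pair_g15_eq hα hν
  have hν0 : 0 < ν := hgym ▸ g15_pos hym
  refine ⟨ym, yp, hym, hymc.trans hcyp, hgym, hgyp, hunique, ?_,
    lt_sqrt_mul_rpow_neg_half_of_lt_g15CritPt hα hym hymc hgym,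
    inv_rpow_mul_rpow_lt_of_g15CritPt_lt hα hcyp hgyp, ?_⟩
  · calc 1 / 2 * ν ^ (-(1 : ℝ) / 2) < ν ^ (-(1 : ℝ) / 2) := by
          linarith [rpow_pos_of_pos hν0 (-(1 : ℝ) / 2)]
      _ < ym := rpow_neg_half_lt_of_g15_le hym hgym.le
  · calc yp < ν ^ (1 / (2 * α)) :=
          lt_rpow_one_div_of_g15_le hα ((g15CritPt_pos hα).trans hcyp) hgyp.le
      _ < 2 * ν ^ (1 / (2 * α)) := by linarith [rpow_pos_of_pos hν0 (1 / (2 * α))]
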